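/- Let B_i ≤ A_i (0 ≤ i < n) be finite idempotent algebras of a common signature, let B = B_0 × ... × B_{n-1} and A = A_0 × ... × A_{n-1}. If B_i is absorbing in A_i with respect to the term t_i for each i, then B is absorbing in A with respect to the term s := t_0 ⋆ t_1 ⋆ ... ⋆ t_{n-1}; and if moreover each B_i is a minimal absorbing subalgebra of A_i, then B is a minimal absorbing subalgebra of A (with respect to s). -/

import Mathlib

/-- A (functional) signature: a type of operation symbols, each with an arity. -/
structure Signature where
  ops : Type
  arity : ops → ℕ

/-- Terms of a signature in `n` variables. -/
inductive UTerm (σ : Signature) : ℕ → Type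
  | var : ∀ {n}, Fin n → UTerm σ n
  | app : ∀ {n} (f : σ.ops), (Fin (σ.arity f) → UTerm σ n) → UTerm σ n

/-- An algebra of signature `σ` on carrier `A`. -/
structure UAlgebra (σ : Signature) (A : Type) where
  interp : ∀ f : σ.ops, (Fin (σ.arity f) → A) → A

namespace UAlgebra

variable {σ : Signature} {A : Type}

/-- The term operation induced by a term. -/
def eval (Alg : UAlgebra σ A) {n : ℕ} : UTerm σ n → (Fin n → A) → A
  | .var i, env => env i
  | .app f ts, env => Alg.interp f fun j => Alg.eval (ts j) env

/-- An algebra is idempotent if every basic operation satisfies `f(a,…,a) = a`. -/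
def Idempotent (Alg : UAlgebra σ A) : Prop :=
  ∀ (f : σ.ops) (a : A), Alg.interp f (fun _ => a) = a

/-- A congruence: an equivalence relation compatible with the basic operations. -/
def IsCong (Alg : UAlgebra σ A) (θ : A → A → Prop) : Prop :=
  (∀ a, θ a a) ∧ (∀ a b, θ a b → θ b a) ∧ (∀ a b c, θ a b → θ b c → θ a c) ∧
  ∀ (f : σ.ops) (x y : Fin (σ.arity f) → A),
    (∀ j, θ (x j) (y j)) → θ (Alg.interp f x) (Alg.interp f y)

/-- A subuniverse: a subset closed under the basic operations. -/
def IsSubuniv (Alg : UAlgebra σ A) (B : Set A) : Prop :=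
  ∀ (f : σ.ops) (x : Fin (σ.arity f) → A), (∀ j, x j ∈ B) → Alg.interp f x ∈ B

/-- A simple algebra: more than one element, and the only congruences are `0` and `1`. -/
def Simple (Alg : UAlgebra σ A) : Prop :=
  (∃ a b : A, a ≠ b) ∧
  ∀ θ : A → A → Prop, Alg.IsCong θ → (∀ a b, θ a b ↔ a = b) ∨ (∀ a b, θ a b)

/-- An abelian algebra: for every `(ℓ+m)`-ary term operation `t` and tuples
`a b : Aᶩ`, `u v : Aᵐ`, `t(a,u) = t(a,v) ↔ t(b,u) = t(b,v)`. -/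
def Abelian (Alg : UAlgebra σ A) : Prop :=
  ∀ (ℓ m : ℕ) (t : UTerm σ (ℓ + m)) (a b : Fin ℓ → A) (u v : Fin m → A),
    (Alg.eval t (Fin.append a u) = Alg.eval t (Fin.append a v) ↔
      Alg.eval t (Fin.append b u) = Alg.eval t (Fin.append b v))

/-- `B` is an absorbing subalgebra of `A` with respect to the `k`-ary term `t`:
`B` is a (nonempty) subuniverse, and applying `t` to arguments all of which lie
in `B` except possibly one (arbitrary in `A`) lands in `B`. -/
def AbsorbingWith (Alg : UAlgebra σ A) (B : Set A) {k : ℕ} (t : UTerm σ k) : Prop :=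
  B.Nonempty ∧ Alg.IsSubuniv B ∧
  ∀ (j : Fin k) (x : Fin k → A), (∀ i, i ≠ j → x i ∈ B) → Alg.eval t x ∈ B

/-- `B ◁ A` : `B` is absorbing with respect to some term. -/
def Absorbing (Alg : UAlgebra σ A) (B : Set A) : Prop :=
  ∃ (k : ℕ) (t : UTerm σ k), Alg.AbsorbingWith B t

/-- `B ◁◁ A` : `B` is minimal among absorbing subuniverses of `A`. -/
def MinAbsorbing (Alg : UAlgebra σ A) (B : Set A) : Prop :=
  Alg.Absorbing B ∧ ∀ C : Set A, Alg.Absorbing C → C ⊆ B → C = B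

/-- A congruence of the subalgebra with universe `R`. -/
def IsCongOn (Alg : UAlgebra σ A) (R : Set A) (θ : A → A → Prop) : Prop :=
  (∀ a ∈ R, θ a a) ∧ (∀ a b, θ a b → θ b a) ∧ (∀ a b c, θ a b → θ b c → θ a c) ∧
  (∀ a b, θ a b → a ∈ R ∧ b ∈ R) ∧
  ∀ (f : σ.ops) (x y : Fin (σ.arity f) → A),
    (∀ j, θ (x j) (y j)) → θ (Alg.interp f x) (Alg.interp f y)

/-- The join of `θ₁` and `θ₂` in the congruence lattice of the subalgebra `R`
is the top congruence `1_R`. -/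
def JoinIsTop (Alg : UAlgebra σ A) (R : Set A) (θ₁ θ₂ : A → A → Prop) : Prop :=
  ∀ θ : A → A → Prop, Alg.IsCongOn R θ →
    (∀ a b, θ₁ a b → θ a b) → (∀ a b, θ₂ a b → θ a b) →
    ∀ a ∈ R, ∀ b ∈ R, θ a b

end UAlgebra

/-- Interpreting a `Fin 2`-indexed choice of the variables `x`, `y`. -/
def pick {A : Type} (x y : A) : Fin 2 → A := fun b => if b = 0 then x else y

/-- `t` is a common Taylor term for the family `Alg`: it is idempotent in every
algebra of the family, and for each coordinate `i` there is an identity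
`t(u_0,…,u_{n-1}) ≈ t(v_0,…,v_{n-1})` (each `u_j, v_j ∈ {x,y}`, `u_i = x`,
`v_i = y`) holding in every algebra of the family. -/
def IsTaylorFamily {σ : Signature} {ι : Type} {A : ι → Type}
    (Alg : ∀ i, UAlgebra σ (A i)) {n : ℕ} (t : UTerm σ n) : Prop :=
  ∃ u v : Fin n → Fin n → Fin 2,
    (∀ i : Fin n, u i i = 0 ∧ v i i = 1) ∧
    ∀ k : ι,
      (∀ a : A k, (Alg k).eval t (fun _ => a) = a) ∧
      ∀ (i : Fin n) (x y : A k),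
        (Alg k).eval t (fun j => pick x y (u i j)) =
        (Alg k).eval t (fun j => pick x y (v i j))

/-- Taylor term of a single algebra. -/
def IsTaylorFor {σ : Signature} {A : Type} (Alg : UAlgebra σ A) {n : ℕ}
    (t : UTerm σ n) : Prop :=
  IsTaylorFamily (fun _ : PUnit => Alg) t

/-- The product algebra of a family of algebras of a common signature. -/
def prodAlgebra {σ : Signature} {ι : Type} {A : ι → Type}
    (Alg : ∀ i, UAlgebra σ (A i)) : UAlgebra σ (∀ i, A i) :=
  ⟨fun f x i => (Alg i).interp f (fun j => x j i)⟩

/-- `R ≤_sd ∏ A_i` : `R` is a (nonempty) subuniverse of the product whose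
coordinate projections are all surjective. -/
def IsSubdirect {σ : Signature} {ι : Type} {A : ι → Type}
    (Alg : ∀ i, UAlgebra σ (A i)) (R : Set (∀ i, A i)) : Prop :=
  R.Nonempty ∧ (prodAlgebra Alg).IsSubuniv R ∧
  ∀ (i : ι) (a : A i), ∃ r ∈ R, r i = a

/-- The kernel `η_s` of the projection of `R` onto the coordinates in `s`,
as a relation (congruence of the subalgebra `R`). -/
def projKer {ι : Type} {A : ι → Type} (R : Set (∀ i, A i)) (s : Set ι) :
    (∀ i, A i) → (∀ i, A i) → Prop :=
  fun x y => x ∈ R ∧ y ∈ R ∧ ∀ i ∈ s, x i = y i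

/-- The kernels of the `i`-th and `j`-th coordinate projections of `R` coincide. -/
def kerEq {ι : Type} {A : ι → Type} (R : Set (∀ i, A i)) (i j : ι) : Prop :=
  ∀ x ∈ R, ∀ y ∈ R, (x i = y i ↔ x j = y j)
/-- A cube term: a `k`-ary idempotent term such that for each coordinate `i`
there is an identity `t(x_1,…,x_k) ≈ y` with each `x_j ∈ {x,y}` and `x_i = x`. -/
def IsCubeTerm {σ : Signature} {A : Type} (Alg : UAlgebra σ A) {k : ℕ}
    (t : UTerm σ k) : Prop :=
  (∀ a : A, Alg.eval t (fun _ => a) = a) ∧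
  ∀ i : Fin k, ∃ u : Fin k → Fin 2, u i = 0 ∧
    ∀ x y : A, Alg.eval t (fun j => pick x y (u j)) = y

/-- A term operation depends on its `j`-th argument. -/
def TermDependsOn {σ : Signature} {A : Type} (Alg : UAlgebra σ A) {k : ℕ}
    (t : UTerm σ k) (j : Fin k) : Prop :=
  ∃ (c : Fin k → A) (x y : A),
    Alg.eval t (Function.update c j x) ≠ Alg.eval t (Function.update c j y)

/-- `s` is a sink for `A`: every term operation depending on its `j`-th argument
returns `s` whenever `s` is placed in position `j`. -/
def IsSink {σ : Signature} {A : Type} (Alg : UAlgebra σ A) (s : A) : Prop :=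
  ∀ (k : ℕ) (t : UTerm σ k) (j : Fin k), TermDependsOn Alg t j →
    ∀ c : Fin k → A, Alg.eval t (Function.update c j s) = s

/-- `C(β, γ; δ)` : `β` centralizes `γ` modulo `δ`. -/
def Centralizes {σ : Signature} {A : Type} (Alg : UAlgebra σ A)
    (β γ δ : A → A → Prop) : Prop :=
  ∀ (ℓ m : ℕ) (t : UTerm σ (ℓ + m)) (a b : Fin ℓ → A) (u v : Fin m → A),
    (∀ i, β (a i) (b i)) → (∀ i, γ (u i) (v i)) →
    (δ (Alg.eval t (Fin.append a u)) (Alg.eval t (Fin.append a v)) ↔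
      δ (Alg.eval t (Fin.append b u)) (Alg.eval t (Fin.append b v)))

/-- The join `θ₁ ∨ θ₂` in the congruence lattice of `Alg`: the least congruence
containing `θ₁` and `θ₂`. -/
def conJoin {σ : Signature} {A : Type} (Alg : UAlgebra σ A)
    (θ₁ θ₂ : A → A → Prop) : A → A → Prop :=
  fun x y => ∀ θ : A → A → Prop, Alg.IsCong θ →
    (∀ a b, θ₁ a b → θ a b) → (∀ a b, θ₂ a b → θ a b) → θ x y

/-- The setoid determined by a congruence. -/
def congSetoid {σ : Signature} {A : Type} {Alg : UAlgebra σ A}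
    {δ : A → A → Prop} (h : Alg.IsCong δ) : Setoid A :=
  ⟨δ, ⟨h.1, fun hab => h.2.1 _ _ hab, fun hab hbc => h.2.2.1 _ _ _ hab hbc⟩⟩

/-- The quotient algebra `A/δ` (of a congruence-induced setoid). -/
noncomputable def quotAlgebra {σ : Signature} {A : Type} (Alg : UAlgebra σ A) (s : Setoid A) :
    UAlgebra σ (Quotient s) :=
  ⟨fun f x => Quotient.mk s (Alg.interp f (fun j => (x j).out))⟩

/-- The image `β/δ` of a congruence `β` on the quotient `A/δ`. -/
def quotCong {A : Type} (s : Setoid A) (β : A → A → Prop) :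
    Quotient s → Quotient s → Prop :=
  fun x y => ∃ a b : A, Quotient.mk s a = x ∧ Quotient.mk s b = y ∧ β a b

/-- Row-major pairing of indices: `(i, j) ↦ i * m + j`. -/
def pairIdx {l m : ℕ} (i : Fin l) (j : Fin m) : Fin (l * m) :=
  ⟨i.val * m + j.val, by
    have h1 : i.val * m + j.val < i.val * m + m := Nat.add_lt_add_left j.isLt _
    have h2 : i.val * m + m = (i.val + 1) * m := (Nat.succ_mul i.val m).symm
    have h3 : (i.val + 1) * m ≤ l * m :=
      Nat.mul_le_mul_right m (Nat.succ_le_of_lt i.isLt)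
    omega⟩

/-- Simultaneous substitution into a term. -/
def UTerm.bind {σ : Signature} {n k : ℕ} : UTerm σ n → (Fin n → UTerm σ k) → UTerm σ k
  | .var i, s => s i
  | .app f ts, s => .app f (fun j => (ts j).bind s)

/-- The star composition `f ⋆ g` of terms: the `ℓm`-ary term
`(f ⋆ g)(a₁₁,…,a_{ℓm}) = f(g(a₁₁,…,a₁ₘ), …, g(a_{ℓ1},…,a_{ℓm}))`. -/
def starTerm {σ : Signature} {l m : ℕ} (f : UTerm σ l) (g : UTerm σ m) :
    UTerm σ (l * m) :=
  f.bind (fun i => g.bind (fun j => .var (pairIdx i j)))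

/-- Star composition on arity-indexed terms. -/
def sigStar {σ : Signature} (p q : Σ k, UTerm σ k) : Σ k, UTerm σ k :=
  ⟨p.1 * q.1, starTerm p.2 q.2⟩

/-- The left-associated iterated star `p ⋆ q₀ ⋆ q₁ ⋆ ⋯`. -/
def iterStar {σ : Signature} (p : Σ k, UTerm σ k) :
    List (Σ k, UTerm σ k) → Σ k, UTerm σ k
  | [] => p
  | q :: rest => iterStar (sigStar p q) rest

/-- `B` is an absorbing subuniverse of the subalgebra with universe `R`. -/
def AbsorbingIn {σ : Signature} {A : Type} (Alg : UAlgebra σ A) (R B : Set A) : Prop :=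
  B.Nonempty ∧ B ⊆ R ∧ Alg.IsSubuniv B ∧
  ∃ (k : ℕ) (t : UTerm σ k), ∀ (j : Fin k) (x : Fin k → A),
    (∀ i, i ≠ j → x i ∈ B) → x j ∈ R → Alg.eval t x ∈ B

/-!
Absorption by `f` or by `g` alone already gives absorption by `f ⋆ g`: if all arguments of
`f ⋆ g` but one lie in `B`, so do all inner `g`-values but one; that one is in `B` as well when
`g` absorbs, and otherwise `f` absorbs it. Hence the iterated star absorbs `B_i` in every
coordinate, and so absorbs the product coordinatewise.

For minimality, let `C ⊆ ∏ B_i` absorb `∏ A_i` via `r` and let `b ∈ ∏ B_i`. If some `x ∈ C` agrees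
with `b` on a set `S` of coordinates and `j ∉ S`, then the `j`-th projection of those elements of
`C` that agree with `b` on `S` is absorbing in `A_j` via `r` (idempotence keeps the coordinates
in `S` fixed), so by minimality of `B_j` it is all of `B_j` and contains `b_j`. Adding the
coordinates one at a time yields `b ∈ C`.
-/

namespace UAlgebra

variable {σ : Signature} {A : Type} (Alg : UAlgebra σ A)

lemma eval_bind {n m : ℕ} (t : UTerm σ n) (s : Fin n → UTerm σ m) (x : Fin m → A) :
    Alg.eval (t.bind s) x = Alg.eval t (fun i => Alg.eval (s i) x) := by
  induction t with
  | var i => rfl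
  | app f ts ih => simp only [UTerm.bind, eval, ih]

lemma pairIdx_eq_finProdFinEquiv {l m : ℕ} (i : Fin l) (j : Fin m) :
    pairIdx i j = finProdFinEquiv (i, j) := by
  ext
  simp only [pairIdx, finProdFinEquiv_apply_val]
  ring

lemma eval_starTerm {l m : ℕ} (f : UTerm σ l) (g : UTerm σ m) (x : Fin (l * m) → A) :
    Alg.eval (starTerm f g) x =
      Alg.eval f (fun i => Alg.eval g (fun j => x (finProdFinEquiv (i, j)))) := by
  simp only [starTerm, eval_bind, eval, pairIdx_eq_finProdFinEquiv]

variable {Alg}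

lemma IsSubuniv.eval_mem {B : Set A} (hB : Alg.IsSubuniv B) {n : ℕ} (t : UTerm σ n)
    {x : Fin n → A} (hx : ∀ i, x i ∈ B) : Alg.eval t x ∈ B := by
  induction t with
  | var i => exact hx i
  | app f ts ih => exact hB f _ ih

lemma Idempotent.eval_const (hAlg : Alg.Idempotent) {n : ℕ} (t : UTerm σ n) (a : A) :
    Alg.eval t (fun _ => a) = a := by
  induction t with
  | var i => rfl
  | app f ts ih => simp only [eval, ih, hAlg f a]

namespace AbsorbingWith

variable {B : Set A} {l m : ℕ}

lemma starTerm_left {f : UTerm σ l} (hB : Alg.AbsorbingWith B f) (g : UTerm σ m) :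
    Alg.AbsorbingWith B (starTerm f g) := by
  obtain ⟨hne, hsub, habs⟩ := hB
  refine ⟨hne, hsub, fun jj x hx => ?_⟩
  obtain ⟨⟨i₀, j₀⟩, rfl⟩ := finProdFinEquiv.surjective jj
  rw [eval_starTerm]
  refine habs i₀ _ fun i hi => hsub.eval_mem g fun j => hx _ ?_
  exact finProdFinEquiv.injective.ne fun h => hi (congrArg Prod.fst h)

lemma starTerm_right (f : UTerm σ l) {g : UTerm σ m} (hB : Alg.AbsorbingWith B g) :
    Alg.AbsorbingWith B (starTerm f g) := by
  obtain ⟨hne, hsub, habs⟩ := hB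
  refine ⟨hne, hsub, fun jj x hx => ?_⟩
  obtain ⟨⟨i₀, j₀⟩, rfl⟩ := finProdFinEquiv.surjective jj
  rw [eval_starTerm]
  refine hsub.eval_mem f fun i => ?_
  by_cases hi : i = i₀
  · subst hi
    refine habs j₀ _ fun j hj => hx _ ?_
    exact finProdFinEquiv.injective.ne fun h => hj (congrArg Prod.snd h)
  · refine hsub.eval_mem g fun j => hx _ ?_
    exact finProdFinEquiv.injective.ne fun h => hi (congrArg Prod.fst h)

lemma iterStar (qs : List (Σ k, UTerm σ k)) (p : Σ k, UTerm σ k)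
    (h : ∃ q ∈ p :: qs, Alg.AbsorbingWith B q.2) :
    Alg.AbsorbingWith B (_root_.iterStar p qs).2 := by
  induction qs generalizing p with
  | nil =>
    obtain ⟨q, hq, hqB⟩ := h
    rwa [List.mem_singleton.1 hq] at hqB
  | cons q' rest ih =>
    apply ih
    obtain ⟨q, hq, hqB⟩ := h
    rcases List.mem_cons.1 hq with rfl | hq
    · exact ⟨_, List.mem_cons_self, hqB.starTerm_left q'.2⟩
    rcases List.mem_cons.1 hq with rfl | hq
    · exact ⟨_, List.mem_cons_self, hqB.starTerm_right p.2⟩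
    · exact ⟨q, List.mem_cons_of_mem _ hq, hqB⟩

end AbsorbingWith

section Product

variable {σ : Signature} {ι : Type} {A : ι → Type} {Alg : ∀ i, UAlgebra σ (A i)}

lemma eval_prodAlgebra {n : ℕ} (t : UTerm σ n) (x : Fin n → ∀ i, A i) (i : ι) :
    (prodAlgebra Alg).eval t x i = (Alg i).eval t (fun j => x j i) := by
  induction t with
  | var j => rfl
  | app f ts ih =>
    change (Alg i).interp f (fun l => (prodAlgebra Alg).eval (ts l) x i) = _
    simp only [ih, eval]

lemma AbsorbingWith.pi {B : ∀ i, Set (A i)} {k : ℕ} {t : UTerm σ k}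
    (habs : ∀ i, (Alg i).AbsorbingWith (B i) t) :
    (prodAlgebra Alg).AbsorbingWith {x | ∀ i, x i ∈ B i} t := by
  choose b hb using fun i => (habs i).1
  refine ⟨⟨b, hb⟩, fun f x hx i => (habs i).2.1 f _ fun j => hx j i, fun j x hx i => ?_⟩
  simp only [eval_prodAlgebra]
  exact (habs i).2.2 j _ fun l hl => hx l hl i

lemma AbsorbingWith.image_eval_agreeing (hidem : ∀ i, (Alg i).Idempotent)
    {C : Set (∀ i, A i)} {m : ℕ} {r : UTerm σ m} (hC : (prodAlgebra Alg).AbsorbingWith C r)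
    {S : Set ι} {b : ∀ i, A i} {j : ι} (hj : j ∉ S) (hne : ∃ x ∈ C, ∀ i ∈ S, x i = b i) :
    (Alg j).AbsorbingWith (Function.eval j '' {x ∈ C | ∀ i ∈ S, x i = b i}) r := by
  classical
  obtain ⟨x₀, hx₀C, hx₀b⟩ := hne
  refine ⟨⟨x₀ j, x₀, ⟨hx₀C, hx₀b⟩, rfl⟩, fun f y hy => ?_, fun j' y hy => ?_⟩
  · choose xs hxs hxsj using hy
    refine ⟨(prodAlgebra Alg).interp f xs, ⟨hC.2.1 f xs fun l => (hxs l).1, fun i hi => ?_⟩, ?_⟩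
    · change (Alg i).interp f (fun l => xs l i) = b i
      simp only [(hxs _).2 i hi, hidem i f]
    · change (Alg j).interp f (fun l => xs l j) = (Alg j).interp f y
      exact congrArg ((Alg j).interp f) (funext hxsj)
  · -- the non-absorbed argument `y j'` is lifted by changing `x₀` in coordinate `j` only
    have hlift : ∀ l, ∃ x : ∀ i, A i, (l ≠ j' → x ∈ C) ∧ (∀ i ∈ S, x i = b i) ∧ x j = y l := by
      intro l
      by_cases hl : l = j'
      · refine ⟨Function.update x₀ j (y l), fun h => absurd hl h, fun i hi => ?_, by simp⟩
        rw [Function.update_of_ne (ne_of_mem_of_not_mem hi hj)]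
        exact hx₀b i hi
      · obtain ⟨x, ⟨hxC, hxb⟩, hxj⟩ := hy l hl
        exact ⟨x, fun _ => hxC, hxb, hxj⟩
    choose X hXC hXb hXj using hlift
    refine ⟨(prodAlgebra Alg).eval r X, ⟨hC.2.2 j' X hXC, fun i hi => ?_⟩, ?_⟩
    · simp only [eval_prodAlgebra, hXb _ i hi, (hidem i).eval_const]
    · simp only [Function.eval, eval_prodAlgebra, hXj]

lemma eq_pi_of_absorbing_subset [Finite ι] (hidem : ∀ i, (Alg i).Idempotent)
    {B : ∀ i, Set (A i)} (hmin : ∀ i, ∀ P, (Alg i).Absorbing P → P ⊆ B i → P = B i)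
    {C : Set (∀ i, A i)} (hC : (prodAlgebra Alg).Absorbing C) (hCB : C ⊆ {x | ∀ i, x i ∈ B i}) :
    C = {x | ∀ i, x i ∈ B i} := by
  classical
  have := Fintype.ofFinite ι
  obtain ⟨m, r, hCr⟩ := hC
  refine hCB.antisymm fun b hb => ?_
  suffices ∀ S : Finset ι, ∃ x ∈ C, ∀ i ∈ S, x i = b i by
    obtain ⟨x, hxC, hxb⟩ := this Finset.univ
    rwa [funext fun i => hxb i (Finset.mem_univ i)] at hxC
  intro S
  induction S using Finset.induction_on with
  | empty =>
    obtain ⟨x, hx⟩ := hCr.1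
    exact ⟨x, hx, by simp⟩
  | insert j S hj ih =>
    have hP := hCr.image_eval_agreeing hidem (S := (S : Set ι)) hj ih
    have hPB : Function.eval j '' {x ∈ C | ∀ i ∈ (S : Set ι), x i = b i} ⊆ B j := by
      rintro _ ⟨x, ⟨hxC, -⟩, rfl⟩
      exact hCB hxC j
    obtain ⟨x, ⟨hxC, hxb⟩, hxj⟩ := (hmin j _ ⟨m, r, hP⟩ hPB).symm ▸ hb j
    refine ⟨x, hxC, fun i hi => ?_⟩
    rcases Finset.mem_insert.1 hi with rfl | hi
    · exact hxj
    · exact hxb i hi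

end Product

end UAlgebra

open UAlgebra

theorem star_absorbing_product_general
    {σ : Signature} {n : ℕ} {A : Fin (n + 1) → Type}
    (Alg : ∀ i, UAlgebra σ (A i)) (hidem : ∀ i, (Alg i).Idempotent)
    (B : ∀ i, Set (A i))
    (k : Fin (n + 1) → ℕ) (t : ∀ i, UTerm σ (k i))
    (habs : ∀ i, (Alg i).AbsorbingWith (B i) (t i)) :
    (prodAlgebra Alg).AbsorbingWith {x | ∀ i, x i ∈ B i}
      (iterStar ⟨k 0, t 0⟩
        ((List.finRange n).map fun i => (⟨k i.succ, t i.succ⟩ : Σ j, UTerm σ j))).2 ∧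
    ((∀ i, (Alg i).MinAbsorbing (B i)) →
      (prodAlgebra Alg).MinAbsorbing {x | ∀ i, x i ∈ B i}) := by
  have hstar : (prodAlgebra Alg).AbsorbingWith {x | ∀ i, x i ∈ B i}
      (iterStar ⟨k 0, t 0⟩
        ((List.finRange n).map fun i => (⟨k i.succ, t i.succ⟩ : Σ j, UTerm σ j))).2 := by
    refine AbsorbingWith.pi fun i => AbsorbingWith.iterStar _ _ ?_
    refine Fin.cases ⟨_, List.mem_cons_self, habs 0⟩ (fun i => ?_) i
    exact ⟨_, List.mem_cons_of_mem _ (List.mem_map_of_mem (List.mem_finRange i)), habs i.succ⟩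
  exact ⟨hstar, fun hmin =>
    ⟨⟨_, _, hstar⟩, fun _ hC hCB => eq_pi_of_absorbing_subset hidem (fun i => (hmin i).2) hC hCB⟩⟩

/-- A product of absorbing subalgebras is absorbing with respect to the
iterated star term, and a product of minimal absorbing subalgebras is a
minimal absorbing subalgebra of the product. -/
theorem star_absorbing_product
    {σ : Signature} {n : ℕ} {A : Fin (n + 1) → Type} [∀ i, Finite (A i)]
    (Alg : ∀ i, UAlgebra σ (A i)) (hidem : ∀ i, (Alg i).Idempotent)
    (B : ∀ i, Set (A i))
    (k : Fin (n + 1) → ℕ) (t : ∀ i, UTerm σ (k i))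
    (habs : ∀ i, (Alg i).AbsorbingWith (B i) (t i)) :
    (prodAlgebra Alg).AbsorbingWith {x | ∀ i, x i ∈ B i}
      (iterStar ⟨k 0, t 0⟩
        ((List.finRange n).map fun i => (⟨k i.succ, t i.succ⟩ : Σ j, UTerm σ j))).2 ∧
    ((∀ i, (Alg i).MinAbsorbing (B i)) →
      (prodAlgebra Alg).MinAbsorbing {x | ∀ i, x i ∈ B i}) :=
  star_absorbing_product_general Alg hidem B k t habs
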